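/- Let 0<s<1 and let N be an integer with N>2s. For every α with 0 ≤ α < (N-2s)/2 one has 0 < λ(α) ≤ Λ_{N,s}, where λ(α) := 2^{2s} Γ((N+2s+2α)/4) Γ((N+2s-2α)/4) / ( Γ((N-2s+2α)/4) Γ((N-2s-2α)/4) ); moreover λ(0) = Λ_{N,s} and λ(α) → 0 as α → ((N-2s)/2)⁻, so that λ maps [0,(N-2s)/2) bijectively onto (0, Λ_{N,s}]. -/
import Mathlib


open MeasureTheory Real Filter

noncomputable section

/-- The best constant in the fractional Hardy inequality:
`Λ_{N,s} = 2^{2s} Γ((N+2s)/4)² / Γ((N-2s)/4)²`. -/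
def hardyConst (N : ℕ) (s : ℝ) : ℝ :=
  2 ^ (2 * s) * Real.Gamma (((N : ℝ) + 2 * s) / 4) ^ 2 /
    Real.Gamma (((N : ℝ) - 2 * s) / 4) ^ 2

/-- The spectral function
`λ(α) = 2^{2s} Γ((N+2s+2α)/4) Γ((N+2s-2α)/4) / (Γ((N-2s+2α)/4) Γ((N-2s-2α)/4))`. -/
def lambdaAlpha (N : ℕ) (s α : ℝ) : ℝ :=
  2 ^ (2 * s) * Real.Gamma (((N : ℝ) + 2 * s + 2 * α) / 4) *
      Real.Gamma (((N : ℝ) + 2 * s - 2 * α) / 4) /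
    (Real.Gamma (((N : ℝ) - 2 * s + 2 * α) / 4) *
      Real.Gamma (((N : ℝ) - 2 * s - 2 * α) / 4))



private lemma prodPos {x : ℝ} (hx : 0 < x) (n : ℕ) :
    0 < ∏ j ∈ Finset.range (n + 1), (x + (j : ℝ)) :=
  Finset.prod_pos fun j _ => by positivity

private lemma pairProd (c t : ℝ) (n : ℕ) :
    (∏ j ∈ Finset.range (n + 1), (c + t + (j : ℝ))) *
      ∏ j ∈ Finset.range (n + 1), (c - t + (j : ℝ)) =
      ∏ j ∈ Finset.range (n + 1), ((c + (j : ℝ)) ^ 2 - t ^ 2) := by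
  rw [← Finset.prod_mul_distrib]
  exact Finset.prod_congr rfl fun j _ => by ring

private lemma prod_ineq (a b t t' : ℝ) (hb : 0 < b) (hba : b < a) (ht : 0 ≤ t)
    (htt' : t ≤ t') (ht'b : t' < b) (n : ℕ) :
    (a ^ 2 - t' ^ 2) * (b ^ 2 - t ^ 2) *
      ∏ j ∈ Finset.range (n + 1), (((a + (j : ℝ)) ^ 2 - t ^ 2) * ((b + (j : ℝ)) ^ 2 - t' ^ 2)) ≤
    (a ^ 2 - t ^ 2) * (b ^ 2 - t' ^ 2) *
      ∏ j ∈ Finset.range (n + 1), (((a + (j : ℝ)) ^ 2 - t' ^ 2) * ((b + (j : ℝ)) ^ 2 - t ^ 2)) := by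
  rw [Finset.prod_range_succ' (fun j : ℕ => ((a + (j : ℝ)) ^ 2 - t ^ 2) * ((b + (j : ℝ)) ^ 2 - t' ^ 2)),
    Finset.prod_range_succ' (fun j : ℕ => ((a + (j : ℝ)) ^ 2 - t' ^ 2) * ((b + (j : ℝ)) ^ 2 - t ^ 2))]
  push_cast
  simp only [add_zero]
  have hPQ : (∏ j ∈ Finset.range n,
      (((a + ((j : ℝ) + 1)) ^ 2 - t ^ 2) * ((b + ((j : ℝ) + 1)) ^ 2 - t' ^ 2))) ≤
      ∏ j ∈ Finset.range n,
      (((a + ((j : ℝ) + 1)) ^ 2 - t' ^ 2) * ((b + ((j : ℝ) + 1)) ^ 2 - t ^ 2)) := by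
    apply Finset.prod_le_prod
    · intro j _
      have hj : (0 : ℝ) ≤ j := Nat.cast_nonneg j
      have f1 : 0 < (a + ((j : ℝ) + 1)) ^ 2 - t ^ 2 := by nlinarith
      have f2 : 0 < (b + ((j : ℝ) + 1)) ^ 2 - t' ^ 2 := by nlinarith
      positivity
    · intro j _
      have hj : (0 : ℝ) ≤ j := Nat.cast_nonneg j
      have h1 : t ^ 2 ≤ t' ^ 2 := by nlinarith
      have h2 : (b + ((j : ℝ) + 1)) ^ 2 ≤ (a + ((j : ℝ) + 1)) ^ 2 := by nlinarith
      nlinarith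
  have hx0 : 0 < (a ^ 2 - t ^ 2) * (b ^ 2 - t' ^ 2) := by
    have f1 : 0 < a ^ 2 - t ^ 2 := by nlinarith
    have f2 : 0 < b ^ 2 - t' ^ 2 := by nlinarith
    positivity
  have hy0 : 0 < (a ^ 2 - t' ^ 2) * (b ^ 2 - t ^ 2) := by
    have f1 : 0 < a ^ 2 - t' ^ 2 := by nlinarith
    have f2 : 0 < b ^ 2 - t ^ 2 := by nlinarith
    positivity
  nlinarith [mul_le_mul_of_nonneg_left hPQ (le_of_lt (mul_pos hy0 hx0))]

private lemma gammaSeq_prod_eq (x y u v : ℝ) (hx : 0 < x) (hy : 0 < y) (hu : 0 < u)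
    (hv : 0 < v) (n : ℕ) :
    Real.GammaSeq x n * Real.GammaSeq y n * (Real.GammaSeq u n * Real.GammaSeq v n) *
      (((∏ j ∈ Finset.range (n + 1), (x + (j : ℝ))) *
        ∏ j ∈ Finset.range (n + 1), (y + (j : ℝ))) *
       ((∏ j ∈ Finset.range (n + 1), (u + (j : ℝ))) *
        ∏ j ∈ Finset.range (n + 1), (v + (j : ℝ)))) =
    ((n : ℝ) ^ x * (Nat.factorial n : ℝ)) * ((n : ℝ) ^ y * (Nat.factorial n : ℝ)) *
      (((n : ℝ) ^ u * (Nat.factorial n : ℝ)) * ((n : ℝ) ^ v * (Nat.factorial n : ℝ))) := by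
  have hGP : ∀ z : ℝ, 0 < z →
      Real.GammaSeq z n * (∏ j ∈ Finset.range (n + 1), (z + (j : ℝ))) =
        (n : ℝ) ^ z * (Nat.factorial n : ℝ) := by
    intro z hz
    rw [Real.GammaSeq, div_mul_cancel₀]
    exact (prodPos hz n).ne'
  rw [← hGP x hx, ← hGP y hy, ← hGP u hu, ← hGP v hv]
  ring

private lemma key_ineq (a b t t' : ℝ) (hb : 0 < b) (hba : b < a) (ht : 0 ≤ t)
    (htt' : t ≤ t') (ht'b : t' < b) :
    Real.Gamma (a + t') * Real.Gamma (a - t') * (Real.Gamma (b + t) * Real.Gamma (b - t)) *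
        ((a ^ 2 - t' ^ 2) * (b ^ 2 - t ^ 2)) ≤
      Real.Gamma (a + t) * Real.Gamma (a - t) * (Real.Gamma (b + t') * Real.Gamma (b - t')) *
        ((a ^ 2 - t ^ 2) * (b ^ 2 - t' ^ 2)) := by
  have hat' : 0 < a + t' := by linarith
  have hat'' : 0 < a - t' := by linarith
  have hbt : 0 < b + t := by linarith
  have hbt' : 0 < b - t := by linarith
  have hbt2 : 0 < b + t' := by linarith
  have hbt2' : 0 < b - t' := by linarith
  have hat : 0 < a + t := by linarith
  have hat2 : 0 < a - t := by linarith
  have h1 : Tendsto (fun n => Real.GammaSeq (a + t') n * Real.GammaSeq (a - t') n *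
      (Real.GammaSeq (b + t) n * Real.GammaSeq (b - t) n) *
      ((a ^ 2 - t' ^ 2) * (b ^ 2 - t ^ 2))) atTop
      (nhds (Real.Gamma (a + t') * Real.Gamma (a - t') *
        (Real.Gamma (b + t) * Real.Gamma (b - t)) *
        ((a ^ 2 - t' ^ 2) * (b ^ 2 - t ^ 2)))) :=
    ((((Real.GammaSeq_tendsto_Gamma _).mul (Real.GammaSeq_tendsto_Gamma _)).mul
      ((Real.GammaSeq_tendsto_Gamma _).mul (Real.GammaSeq_tendsto_Gamma _))).mul
      tendsto_const_nhds)
  have h2 : Tendsto (fun n => Real.GammaSeq (a + t) n * Real.GammaSeq (a - t) n *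
      (Real.GammaSeq (b + t') n * Real.GammaSeq (b - t') n) *
      ((a ^ 2 - t ^ 2) * (b ^ 2 - t' ^ 2))) atTop
      (nhds (Real.Gamma (a + t) * Real.Gamma (a - t) *
        (Real.Gamma (b + t') * Real.Gamma (b - t')) *
        ((a ^ 2 - t ^ 2) * (b ^ 2 - t' ^ 2)))) :=
    ((((Real.GammaSeq_tendsto_Gamma _).mul (Real.GammaSeq_tendsto_Gamma _)).mul
      ((Real.GammaSeq_tendsto_Gamma _).mul (Real.GammaSeq_tendsto_Gamma _))).mul
      tendsto_const_nhds)
  refine le_of_tendsto_of_tendsto h1 h2 ?_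
  rw [Filter.EventuallyLE, eventually_atTop]
  refine ⟨1, fun n hn => ?_⟩
  have hn0 : 0 < n := hn
  have hc0 : (0 : ℝ) < (n : ℝ) := by exact_mod_cast hn0
  have hXpos : 0 < ∏ j ∈ Finset.range (n + 1),
      (((a + (j : ℝ)) ^ 2 - t ^ 2) * ((b + (j : ℝ)) ^ 2 - t' ^ 2)) := by
    apply Finset.prod_pos
    intro j _
    have hj : (0 : ℝ) ≤ j := Nat.cast_nonneg j
    have f1 : 0 < (a + (j : ℝ)) ^ 2 - t ^ 2 := by nlinarith
    have f2 : 0 < (b + (j : ℝ)) ^ 2 - t' ^ 2 := by nlinarith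
    positivity
  have hYpos : 0 < ∏ j ∈ Finset.range (n + 1),
      (((a + (j : ℝ)) ^ 2 - t' ^ 2) * ((b + (j : ℝ)) ^ 2 - t ^ 2)) := by
    apply Finset.prod_pos
    intro j _
    have hj : (0 : ℝ) ≤ j := Nat.cast_nonneg j
    have f1 : 0 < (a + (j : ℝ)) ^ 2 - t' ^ 2 := by nlinarith
    have f2 : 0 < (b + (j : ℝ)) ^ 2 - t ^ 2 := by nlinarith
    positivity
  -- the two key equalities
  have E1 : Real.GammaSeq (a + t') n * Real.GammaSeq (a - t') n *
      (Real.GammaSeq (b + t) n * Real.GammaSeq (b - t) n) *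
      (∏ j ∈ Finset.range (n + 1),
        (((a + (j : ℝ)) ^ 2 - t' ^ 2) * ((b + (j : ℝ)) ^ 2 - t ^ 2))) =
      ((n : ℝ) ^ (a + t') * (Nat.factorial n : ℝ)) *
        ((n : ℝ) ^ (a - t') * (Nat.factorial n : ℝ)) *
      (((n : ℝ) ^ (b + t) * (Nat.factorial n : ℝ)) *
        ((n : ℝ) ^ (b - t) * (Nat.factorial n : ℝ))) := by
    rw [Finset.prod_mul_distrib, ← pairProd a t' n, ← pairProd b t n]
    exact gammaSeq_prod_eq _ _ _ _ hat' hat'' hbt hbt' n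
  have E2 : Real.GammaSeq (a + t) n * Real.GammaSeq (a - t) n *
      (Real.GammaSeq (b + t') n * Real.GammaSeq (b - t') n) *
      (∏ j ∈ Finset.range (n + 1),
        (((a + (j : ℝ)) ^ 2 - t ^ 2) * ((b + (j : ℝ)) ^ 2 - t' ^ 2))) =
      ((n : ℝ) ^ (a + t) * (Nat.factorial n : ℝ)) *
        ((n : ℝ) ^ (a - t) * (Nat.factorial n : ℝ)) *
      (((n : ℝ) ^ (b + t') * (Nat.factorial n : ℝ)) *
        ((n : ℝ) ^ (b - t') * (Nat.factorial n : ℝ))) := by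
    rw [Finset.prod_mul_distrib, ← pairProd a t n, ← pairProd b t' n]
    exact gammaSeq_prod_eq _ _ _ _ hat hat2 hbt2 hbt2' n
  have hKeq : ((n : ℝ) ^ (a + t') * (Nat.factorial n : ℝ)) *
        ((n : ℝ) ^ (a - t') * (Nat.factorial n : ℝ)) *
      (((n : ℝ) ^ (b + t) * (Nat.factorial n : ℝ)) *
        ((n : ℝ) ^ (b - t) * (Nat.factorial n : ℝ))) =
      ((n : ℝ) ^ (a + t) * (Nat.factorial n : ℝ)) *
        ((n : ℝ) ^ (a - t) * (Nat.factorial n : ℝ)) *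
      (((n : ℝ) ^ (b + t') * (Nat.factorial n : ℝ)) *
        ((n : ℝ) ^ (b - t') * (Nat.factorial n : ℝ))) := by
    have ea : (n : ℝ) ^ (a + t') * (n : ℝ) ^ (a - t') =
        (n : ℝ) ^ (a + t) * (n : ℝ) ^ (a - t) := by
      rw [← Real.rpow_add hc0, ← Real.rpow_add hc0]; ring_nf
    have eb : (n : ℝ) ^ (b + t) * (n : ℝ) ^ (b - t) =
        (n : ℝ) ^ (b + t') * (n : ℝ) ^ (b - t') := by
      rw [← Real.rpow_add hc0, ← Real.rpow_add hc0]; ring_nf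
    calc ((n : ℝ) ^ (a + t') * (Nat.factorial n : ℝ)) *
          ((n : ℝ) ^ (a - t') * (Nat.factorial n : ℝ)) *
        (((n : ℝ) ^ (b + t) * (Nat.factorial n : ℝ)) *
          ((n : ℝ) ^ (b - t) * (Nat.factorial n : ℝ)))
        = ((n : ℝ) ^ (a + t') * (n : ℝ) ^ (a - t')) *
          ((n : ℝ) ^ (b + t) * (n : ℝ) ^ (b - t)) * (Nat.factorial n : ℝ) ^ 4 := by ring
      _ = ((n : ℝ) ^ (a + t) * (n : ℝ) ^ (a - t)) *
          ((n : ℝ) ^ (b + t') * (n : ℝ) ^ (b - t')) * (Nat.factorial n : ℝ) ^ 4 := by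
          rw [ea, eb]
      _ = _ := by ring
  have hKpos : 0 < ((n : ℝ) ^ (a + t) * (Nat.factorial n : ℝ)) *
        ((n : ℝ) ^ (a - t) * (Nat.factorial n : ℝ)) *
      (((n : ℝ) ^ (b + t') * (Nat.factorial n : ℝ)) *
        ((n : ℝ) ^ (b - t') * (Nat.factorial n : ℝ))) := by
    have hf : (0 : ℝ) < (Nat.factorial n : ℝ) := by
      exact_mod_cast Nat.factorial_pos n
    positivity
  have hprod := prod_ineq a b t t' hb hba ht htt' ht'b n
  rw [hKeq] at E1
  -- conclude
  have hmain : Real.GammaSeq (a + t') n * Real.GammaSeq (a - t') n *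
      (Real.GammaSeq (b + t) n * Real.GammaSeq (b - t) n) *
      ((a ^ 2 - t' ^ 2) * (b ^ 2 - t ^ 2)) *
      ((∏ j ∈ Finset.range (n + 1),
        (((a + (j : ℝ)) ^ 2 - t ^ 2) * ((b + (j : ℝ)) ^ 2 - t' ^ 2))) *
       (∏ j ∈ Finset.range (n + 1),
        (((a + (j : ℝ)) ^ 2 - t' ^ 2) * ((b + (j : ℝ)) ^ 2 - t ^ 2)))) ≤
      Real.GammaSeq (a + t) n * Real.GammaSeq (a - t) n *
      (Real.GammaSeq (b + t') n * Real.GammaSeq (b - t') n) *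
      ((a ^ 2 - t ^ 2) * (b ^ 2 - t' ^ 2)) *
      ((∏ j ∈ Finset.range (n + 1),
        (((a + (j : ℝ)) ^ 2 - t ^ 2) * ((b + (j : ℝ)) ^ 2 - t' ^ 2))) *
       (∏ j ∈ Finset.range (n + 1),
        (((a + (j : ℝ)) ^ 2 - t' ^ 2) * ((b + (j : ℝ)) ^ 2 - t ^ 2)))) := by
    calc Real.GammaSeq (a + t') n * Real.GammaSeq (a - t') n *
        (Real.GammaSeq (b + t) n * Real.GammaSeq (b - t) n) *
        ((a ^ 2 - t' ^ 2) * (b ^ 2 - t ^ 2)) *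
        ((∏ j ∈ Finset.range (n + 1),
          (((a + (j : ℝ)) ^ 2 - t ^ 2) * ((b + (j : ℝ)) ^ 2 - t' ^ 2))) *
         (∏ j ∈ Finset.range (n + 1),
          (((a + (j : ℝ)) ^ 2 - t' ^ 2) * ((b + (j : ℝ)) ^ 2 - t ^ 2))))
        = (Real.GammaSeq (a + t') n * Real.GammaSeq (a - t') n *
          (Real.GammaSeq (b + t) n * Real.GammaSeq (b - t) n) *
          (∏ j ∈ Finset.range (n + 1),
            (((a + (j : ℝ)) ^ 2 - t' ^ 2) * ((b + (j : ℝ)) ^ 2 - t ^ 2)))) *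
          ((a ^ 2 - t' ^ 2) * (b ^ 2 - t ^ 2) *
           ∏ j ∈ Finset.range (n + 1),
            (((a + (j : ℝ)) ^ 2 - t ^ 2) * ((b + (j : ℝ)) ^ 2 - t' ^ 2))) := by ring
      _ ≤ (Real.GammaSeq (a + t') n * Real.GammaSeq (a - t') n *
          (Real.GammaSeq (b + t) n * Real.GammaSeq (b - t) n) *
          (∏ j ∈ Finset.range (n + 1),
            (((a + (j : ℝ)) ^ 2 - t' ^ 2) * ((b + (j : ℝ)) ^ 2 - t ^ 2)))) *
          ((a ^ 2 - t ^ 2) * (b ^ 2 - t' ^ 2) *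
           ∏ j ∈ Finset.range (n + 1),
            (((a + (j : ℝ)) ^ 2 - t' ^ 2) * ((b + (j : ℝ)) ^ 2 - t ^ 2))) := by
          rw [E1]
          exact mul_le_mul_of_nonneg_left hprod hKpos.le
      _ = (Real.GammaSeq (a + t) n * Real.GammaSeq (a - t) n *
          (Real.GammaSeq (b + t') n * Real.GammaSeq (b - t') n) *
          (∏ j ∈ Finset.range (n + 1),
            (((a + (j : ℝ)) ^ 2 - t ^ 2) * ((b + (j : ℝ)) ^ 2 - t' ^ 2)))) *
          ((a ^ 2 - t ^ 2) * (b ^ 2 - t' ^ 2) *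
           ∏ j ∈ Finset.range (n + 1),
            (((a + (j : ℝ)) ^ 2 - t' ^ 2) * ((b + (j : ℝ)) ^ 2 - t ^ 2))) := by
          rw [E1, E2]
      _ = _ := by ring
  exact le_of_mul_le_mul_right hmain (mul_pos hXpos hYpos)


private lemma gamma_strict (a b t t' : ℝ) (hb : 0 < b) (hba : b < a) (ht : 0 ≤ t)
    (htt' : t < t') (ht'b : t' < b) :
    Real.Gamma (a + t') * Real.Gamma (a - t') * (Real.Gamma (b + t) * Real.Gamma (b - t)) <
      Real.Gamma (a + t) * Real.Gamma (a - t) * (Real.Gamma (b + t') * Real.Gamma (b - t')) := by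
  have key := key_ineq a b t t' hb hba ht htt'.le ht'b
  have hy0 : 0 < (a ^ 2 - t' ^ 2) * (b ^ 2 - t ^ 2) := by
    have f1 : 0 < a ^ 2 - t' ^ 2 := by nlinarith
    have f2 : 0 < b ^ 2 - t ^ 2 := by nlinarith
    positivity
  have hx0y0 : (a ^ 2 - t ^ 2) * (b ^ 2 - t' ^ 2) < (a ^ 2 - t' ^ 2) * (b ^ 2 - t ^ 2) := by
    have h1 : t ^ 2 < t' ^ 2 := by nlinarith
    have h2 : b ^ 2 < a ^ 2 := by nlinarith
    nlinarith
  have hR : 0 < Real.Gamma (a + t) * Real.Gamma (a - t) *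
      (Real.Gamma (b + t') * Real.Gamma (b - t')) := by
    have g1 := Real.Gamma_pos_of_pos (show (0:ℝ) < a + t by linarith)
    have g2 := Real.Gamma_pos_of_pos (show (0:ℝ) < a - t by linarith)
    have g3 := Real.Gamma_pos_of_pos (show (0:ℝ) < b + t' by linarith)
    have g4 := Real.Gamma_pos_of_pos (show (0:ℝ) < b - t' by linarith)
    positivity
  have : Real.Gamma (a + t') * Real.Gamma (a - t') *
      (Real.Gamma (b + t) * Real.Gamma (b - t)) * ((a ^ 2 - t' ^ 2) * (b ^ 2 - t ^ 2)) <
      Real.Gamma (a + t) * Real.Gamma (a - t) *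
      (Real.Gamma (b + t') * Real.Gamma (b - t')) * ((a ^ 2 - t' ^ 2) * (b ^ 2 - t ^ 2)) :=
    lt_of_le_of_lt key (by exact mul_lt_mul_of_pos_left hx0y0 hR)
  exact lt_of_mul_lt_mul_right this hy0.le


private lemma lambda_eq (N : ℕ) (s α : ℝ) :
    lambdaAlpha N s α =
      2 ^ (2 * s) * (Real.Gamma (((N : ℝ) + 2 * s) / 4 + α / 2) *
        Real.Gamma (((N : ℝ) + 2 * s) / 4 - α / 2)) /
      (Real.Gamma (((N : ℝ) - 2 * s) / 4 + α / 2) *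
        Real.Gamma (((N : ℝ) - 2 * s) / 4 - α / 2)) := by
  unfold lambdaAlpha
  rw [show ((N : ℝ) + 2 * s + 2 * α) / 4 = ((N : ℝ) + 2 * s) / 4 + α / 2 by ring,
    show ((N : ℝ) + 2 * s - 2 * α) / 4 = ((N : ℝ) + 2 * s) / 4 - α / 2 by ring,
    show ((N : ℝ) - 2 * s + 2 * α) / 4 = ((N : ℝ) - 2 * s) / 4 + α / 2 by ring,
    show ((N : ℝ) - 2 * s - 2 * α) / 4 = ((N : ℝ) - 2 * s) / 4 - α / 2 by ring,
    mul_assoc]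

private lemma contGamma {x : ℝ} (hx : 0 < x) : ContinuousAt Real.Gamma x := by
  refine (Real.differentiableAt_Gamma fun m => ?_).continuousAt
  have h0 : (0 : ℝ) ≤ m := Nat.cast_nonneg m
  intro h
  rw [h] at hx
  linarith

private lemma lambda_zero (N : ℕ) (s : ℝ) : lambdaAlpha N s 0 = hardyConst N s := by
  unfold lambdaAlpha hardyConst
  norm_num
  ring

private lemma lambda_contAt (N : ℕ) (s α : ℝ) (hs : 0 < s) (hN : 2 * s < (N : ℝ))
    (h0 : 0 ≤ α) (hβ : α < ((N : ℝ) - 2 * s) / 2) :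
    ContinuousAt (fun x => lambdaAlpha N s x) α := by
  unfold lambdaAlpha
  have c1 : Continuous fun x : ℝ => ((N : ℝ) + 2 * s + 2 * x) / 4 := by fun_prop
  have c2 : Continuous fun x : ℝ => ((N : ℝ) + 2 * s - 2 * x) / 4 := by fun_prop
  have c3 : Continuous fun x : ℝ => ((N : ℝ) - 2 * s + 2 * x) / 4 := by fun_prop
  have c4 : Continuous fun x : ℝ => ((N : ℝ) - 2 * s - 2 * x) / 4 := by fun_prop
  have h1 : 0 < ((N : ℝ) + 2 * s + 2 * α) / 4 := by linarith
  have h2 : 0 < ((N : ℝ) + 2 * s - 2 * α) / 4 := by linarith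
  have h3 : 0 < ((N : ℝ) - 2 * s + 2 * α) / 4 := by linarith
  have h4 : 0 < ((N : ℝ) - 2 * s - 2 * α) / 4 := by linarith
  have g1 : ContinuousAt (fun x : ℝ => Real.Gamma (((N : ℝ) + 2 * s + 2 * x) / 4)) α := by
    have := ContinuousAt.comp (g := Real.Gamma) (f := fun x : ℝ => ((N : ℝ) + 2 * s + 2 * x) / 4) (x := α) (contGamma h1) c1.continuousAt
    exact this
  have g2 : ContinuousAt (fun x : ℝ => Real.Gamma (((N : ℝ) + 2 * s - 2 * x) / 4)) α := by
    have := ContinuousAt.comp (g := Real.Gamma) (f := fun x : ℝ => ((N : ℝ) + 2 * s - 2 * x) / 4) (x := α) (contGamma h2) c2.continuousAt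
    exact this
  have g3 : ContinuousAt (fun x : ℝ => Real.Gamma (((N : ℝ) - 2 * s + 2 * x) / 4)) α := by
    have := ContinuousAt.comp (g := Real.Gamma) (f := fun x : ℝ => ((N : ℝ) - 2 * s + 2 * x) / 4) (x := α) (contGamma h3) c3.continuousAt
    exact this
  have g4 : ContinuousAt (fun x : ℝ => Real.Gamma (((N : ℝ) - 2 * s - 2 * x) / 4)) α := by
    have := ContinuousAt.comp (g := Real.Gamma) (f := fun x : ℝ => ((N : ℝ) - 2 * s - 2 * x) / 4) (x := α) (contGamma h4) c4.continuousAt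
    exact this
  exact ((continuousAt_const.mul g1).mul g2).div (g3.mul g4)
    (by positivity)


/-- For `0 < s < 1` and `N > 2s`: `0 < λ(α) ≤ Λ_{N,s}` for every `α ∈ [0,(N-2s)/2)`,
`λ(0) = Λ_{N,s}`, `λ(α) → 0` as `α → ((N-2s)/2)⁻`, and `λ` maps `[0,(N-2s)/2)` bijectively
onto `(0, Λ_{N,s}]`. -/
theorem lambdaAlpha_range (N : ℕ) (s : ℝ) (hs0 : 0 < s) (hs1 : s < 1)
    (hN : 2 * s < (N : ℝ)) :
    (∀ α ∈ Set.Ico (0 : ℝ) (((N : ℝ) - 2 * s) / 2),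
      0 < lambdaAlpha N s α ∧ lambdaAlpha N s α ≤ hardyConst N s) ∧
    lambdaAlpha N s 0 = hardyConst N s ∧
    Tendsto (fun α => lambdaAlpha N s α)
      (nhdsWithin (((N : ℝ) - 2 * s) / 2) (Set.Iio (((N : ℝ) - 2 * s) / 2))) (nhds 0) ∧
    Set.BijOn (fun α => lambdaAlpha N s α) (Set.Ico (0 : ℝ) (((N : ℝ) - 2 * s) / 2))
      (Set.Ioc (0 : ℝ) (hardyConst N s)) := by
  have hβpos : 0 < ((N : ℝ) - 2 * s) / 2 := by linarith
  have hb : 0 < ((N : ℝ) - 2 * s) / 4 := by linarith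
  have hba : ((N : ℝ) - 2 * s) / 4 < ((N : ℝ) + 2 * s) / 4 := by linarith
  -- strict anti-monotonicity
  have hanti : StrictAntiOn (fun α => lambdaAlpha N s α)
      (Set.Ico (0 : ℝ) (((N : ℝ) - 2 * s) / 2)) := by
    intro x hx y hy hxy
    simp only
    rw [lambda_eq, lambda_eq]
    have hx0 : (0 : ℝ) ≤ x := hx.1
    have hyβ : y < ((N : ℝ) - 2 * s) / 2 := hy.2
    have key := gamma_strict (((N : ℝ) + 2 * s) / 4) (((N : ℝ) - 2 * s) / 4) (x / 2) (y / 2)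
      hb hba (by linarith) (by linarith) (by linarith)
    have dX : 0 < Real.Gamma (((N : ℝ) - 2 * s) / 4 + x / 2) *
        Real.Gamma (((N : ℝ) - 2 * s) / 4 - x / 2) :=
      mul_pos (Real.Gamma_pos_of_pos (by linarith)) (Real.Gamma_pos_of_pos (by linarith))
    have dY : 0 < Real.Gamma (((N : ℝ) - 2 * s) / 4 + y / 2) *
        Real.Gamma (((N : ℝ) - 2 * s) / 4 - y / 2) :=
      mul_pos (Real.Gamma_pos_of_pos (by linarith)) (Real.Gamma_pos_of_pos (by linarith))
    rw [div_lt_div_iff₀ dY dX]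
    have h2s : (0 : ℝ) < 2 ^ (2 * s) := by positivity
    have h2 := mul_lt_mul_of_pos_left key h2s
    calc 2 ^ (2 * s) * (Real.Gamma (((N : ℝ) + 2 * s) / 4 + y / 2) *
          Real.Gamma (((N : ℝ) + 2 * s) / 4 - y / 2)) *
          (Real.Gamma (((N : ℝ) - 2 * s) / 4 + x / 2) *
          Real.Gamma (((N : ℝ) - 2 * s) / 4 - x / 2))
        = 2 ^ (2 * s) * (Real.Gamma (((N : ℝ) + 2 * s) / 4 + y / 2) *
          Real.Gamma (((N : ℝ) + 2 * s) / 4 - y / 2) *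
          (Real.Gamma (((N : ℝ) - 2 * s) / 4 + x / 2) *
          Real.Gamma (((N : ℝ) - 2 * s) / 4 - x / 2))) := by ring
      _ < 2 ^ (2 * s) * (Real.Gamma (((N : ℝ) + 2 * s) / 4 + x / 2) *
          Real.Gamma (((N : ℝ) + 2 * s) / 4 - x / 2) *
          (Real.Gamma (((N : ℝ) - 2 * s) / 4 + y / 2) *
          Real.Gamma (((N : ℝ) - 2 * s) / 4 - y / 2))) := h2
      _ = 2 ^ (2 * s) * (Real.Gamma (((N : ℝ) + 2 * s) / 4 + x / 2) *
          Real.Gamma (((N : ℝ) + 2 * s) / 4 - x / 2)) *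
          (Real.Gamma (((N : ℝ) - 2 * s) / 4 + y / 2) *
          Real.Gamma (((N : ℝ) - 2 * s) / 4 - y / 2)) := by ring
  -- positivity
  have hpos : ∀ α ∈ Set.Ico (0 : ℝ) (((N : ℝ) - 2 * s) / 2), 0 < lambdaAlpha N s α := by
    intro α hα
    rw [lambda_eq]
    have g1 := Real.Gamma_pos_of_pos (show (0:ℝ) < ((N : ℝ) + 2 * s) / 4 + α / 2 by
      have := hα.1; linarith)
    have g2 := Real.Gamma_pos_of_pos (show (0:ℝ) < ((N : ℝ) + 2 * s) / 4 - α / 2 by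
      have := hα.2; linarith)
    have g3 := Real.Gamma_pos_of_pos (show (0:ℝ) < ((N : ℝ) - 2 * s) / 4 + α / 2 by
      have := hα.1; linarith)
    have g4 := Real.Gamma_pos_of_pos (show (0:ℝ) < ((N : ℝ) - 2 * s) / 4 - α / 2 by
      have := hα.2; linarith)
    have h2s : (0 : ℝ) < 2 ^ (2 * s) := by positivity
    exact div_pos (mul_pos h2s (mul_pos g1 g2)) (mul_pos g3 g4)
  have hzero : (0 : ℝ) ∈ Set.Ico (0 : ℝ) (((N : ℝ) - 2 * s) / 2) := ⟨le_refl 0, hβpos⟩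
  have hle : ∀ α ∈ Set.Ico (0 : ℝ) (((N : ℝ) - 2 * s) / 2),
      lambdaAlpha N s α ≤ hardyConst N s := by
    intro α hα
    rcases eq_or_lt_of_le hα.1 with h | h
    · rw [← h, lambda_zero]
    · rw [← lambda_zero N s]
      exact (hanti hzero hα h).le
  -- the limit
  have htend : Tendsto (fun α => lambdaAlpha N s α)
      (nhdsWithin (((N : ℝ) - 2 * s) / 2) (Set.Iio (((N : ℝ) - 2 * s) / 2))) (nhds 0) := by
    set F : ℝ → ℝ := fun α =>
      2 ^ (2 * s) * Real.Gamma (((N : ℝ) + 2 * s + 2 * α) / 4) *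
        Real.Gamma (((N : ℝ) + 2 * s - 2 * α) / 4) / Real.Gamma (((N : ℝ) - 2 * s + 2 * α) / 4) *
        ((((N : ℝ) - 2 * s - 2 * α) / 4) / Real.Gamma (((N : ℝ) - 2 * s - 2 * α) / 4 + 1))
      with hF
    have hFc : ContinuousAt F (((N : ℝ) - 2 * s) / 2) := by
      have c1 : Continuous fun x : ℝ => ((N : ℝ) + 2 * s + 2 * x) / 4 := by fun_prop
      have c2 : Continuous fun x : ℝ => ((N : ℝ) + 2 * s - 2 * x) / 4 := by fun_prop
      have c3 : Continuous fun x : ℝ => ((N : ℝ) - 2 * s + 2 * x) / 4 := by fun_prop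
      have c4 : Continuous fun x : ℝ => ((N : ℝ) - 2 * s - 2 * x) / 4 + 1 := by fun_prop
      have c5 : Continuous fun x : ℝ => ((N : ℝ) - 2 * s - 2 * x) / 4 := by fun_prop
      have h1 : (0:ℝ) < ((N : ℝ) + 2 * s + 2 * (((N : ℝ) - 2 * s) / 2)) / 4 := by linarith
      have h2 : (0:ℝ) < ((N : ℝ) + 2 * s - 2 * (((N : ℝ) - 2 * s) / 2)) / 4 := by linarith
      have h3 : (0:ℝ) < ((N : ℝ) - 2 * s + 2 * (((N : ℝ) - 2 * s) / 2)) / 4 := by linarith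
      have h4 : (0:ℝ) < ((N : ℝ) - 2 * s - 2 * (((N : ℝ) - 2 * s) / 2)) / 4 + 1 := by linarith
      have g1 : ContinuousAt (fun x : ℝ => Real.Gamma (((N : ℝ) + 2 * s + 2 * x) / 4))
          (((N : ℝ) - 2 * s) / 2) := by
        have := ContinuousAt.comp (g := Real.Gamma)
          (f := fun x : ℝ => ((N : ℝ) + 2 * s + 2 * x) / 4)
          (x := ((N : ℝ) - 2 * s) / 2) (contGamma h1) c1.continuousAt
        exact this
      have g2 : ContinuousAt (fun x : ℝ => Real.Gamma (((N : ℝ) + 2 * s - 2 * x) / 4))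
          (((N : ℝ) - 2 * s) / 2) := by
        have := ContinuousAt.comp (g := Real.Gamma)
          (f := fun x : ℝ => ((N : ℝ) + 2 * s - 2 * x) / 4)
          (x := ((N : ℝ) - 2 * s) / 2) (contGamma h2) c2.continuousAt
        exact this
      have g3 : ContinuousAt (fun x : ℝ => Real.Gamma (((N : ℝ) - 2 * s + 2 * x) / 4))
          (((N : ℝ) - 2 * s) / 2) := by
        have := ContinuousAt.comp (g := Real.Gamma)
          (f := fun x : ℝ => ((N : ℝ) - 2 * s + 2 * x) / 4)
          (x := ((N : ℝ) - 2 * s) / 2) (contGamma h3) c3.continuousAt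
        exact this
      have g4 : ContinuousAt (fun x : ℝ => Real.Gamma (((N : ℝ) - 2 * s - 2 * x) / 4 + 1))
          (((N : ℝ) - 2 * s) / 2) := by
        have := ContinuousAt.comp (g := Real.Gamma)
          (f := fun x : ℝ => ((N : ℝ) - 2 * s - 2 * x) / 4 + 1)
          (x := ((N : ℝ) - 2 * s) / 2) (contGamma h4) c4.continuousAt
        exact this
      have hg3ne : Real.Gamma (((N : ℝ) - 2 * s + 2 * (((N : ℝ) - 2 * s) / 2)) / 4) ≠ 0 :=
        (Real.Gamma_pos_of_pos h3).ne'
      have hg4ne : Real.Gamma (((N : ℝ) - 2 * s - 2 * (((N : ℝ) - 2 * s) / 2)) / 4 + 1) ≠ 0 :=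
        (Real.Gamma_pos_of_pos h4).ne'
      exact (((continuousAt_const.mul g1).mul g2).div g3 hg3ne).mul
        (c5.continuousAt.div g4 hg4ne)
    have hF0 : F (((N : ℝ) - 2 * s) / 2) = 0 := by
      rw [hF]
      simp only
      have : ((N : ℝ) - 2 * s - 2 * (((N : ℝ) - 2 * s) / 2)) / 4 = 0 := by ring
      rw [this]
      simp
    have hFt : Tendsto F
        (nhdsWithin (((N : ℝ) - 2 * s) / 2) (Set.Iio (((N : ℝ) - 2 * s) / 2))) (nhds 0) := by
      rw [← hF0]
      exact hFc.continuousWithinAt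
    refine Tendsto.congr' ?_ hFt
    filter_upwards [self_mem_nhdsWithin,
      eventually_nhdsWithin_of_eventually_nhds (eventually_gt_nhds hβpos)] with α h1 h2
    have hαβ : α < ((N : ℝ) - 2 * s) / 2 := h1
    have hu4 : 0 < ((N : ℝ) - 2 * s - 2 * α) / 4 := by linarith
    have hu3 : 0 < ((N : ℝ) - 2 * s + 2 * α) / 4 := by linarith
    have hg3 : Real.Gamma (((N : ℝ) - 2 * s + 2 * α) / 4) ≠ 0 :=
      (Real.Gamma_pos_of_pos hu3).ne'
    have hg4 : Real.Gamma (((N : ℝ) - 2 * s - 2 * α) / 4) ≠ 0 :=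
      (Real.Gamma_pos_of_pos hu4).ne'
    simp only [hF]
    conv_lhs => rw [Real.Gamma_add_one hu4.ne', div_mul_eq_div_div, div_self hu4.ne',
      div_mul_div_comm, mul_one]
    rfl
  -- bijectivity
  have hsurj : Set.SurjOn (fun α => lambdaAlpha N s α)
      (Set.Ico (0 : ℝ) (((N : ℝ) - 2 * s) / 2)) (Set.Ioc (0 : ℝ) (hardyConst N s)) := by
    intro y hy
    rcases eq_or_lt_of_le hy.2 with h | h
    · exact ⟨0, hzero, by show lambdaAlpha N s 0 = y; rw [lambda_zero, h]⟩
    · have hev : ∀ᶠ α in nhdsWithin (((N : ℝ) - 2 * s) / 2)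
          (Set.Iio (((N : ℝ) - 2 * s) / 2)), lambdaAlpha N s α < y :=
        htend.eventually_lt_const hy.1
      have hev2 : ∀ᶠ α in nhdsWithin (((N : ℝ) - 2 * s) / 2)
          (Set.Iio (((N : ℝ) - 2 * s) / 2)), 0 < α :=
        eventually_nhdsWithin_of_eventually_nhds (eventually_gt_nhds hβpos)
      have hev3 : ∀ᶠ α in nhdsWithin (((N : ℝ) - 2 * s) / 2)
          (Set.Iio (((N : ℝ) - 2 * s) / 2)), α ∈ Set.Iio (((N : ℝ) - 2 * s) / 2) :=
        self_mem_nhdsWithin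
      obtain ⟨α', hα'1, hα'2, hα'3⟩ := (hev.and (hev2.and hev3)).exists
      have hα'β : α' < ((N : ℝ) - 2 * s) / 2 := hα'3
      have hcont : ContinuousOn (fun α => lambdaAlpha N s α) (Set.Icc 0 α') := by
        intro x hx
        exact (lambda_contAt N s x hs0 hN hx.1 (lt_of_le_of_lt hx.2 hα'β)).continuousWithinAt
      have hIVT := intermediate_value_Icc' hα'2.le hcont
      have hmem : y ∈ Set.Icc (lambdaAlpha N s α') (lambdaAlpha N s 0) := by
        constructor
        · exact hα'1.le
        · rw [lambda_zero]; exact hy.2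
      obtain ⟨x, hx, hxy⟩ := hIVT hmem
      exact ⟨x, ⟨hx.1, lt_of_le_of_lt hx.2 hα'β⟩, hxy⟩
  refine ⟨fun α hα => ⟨hpos α hα, hle α hα⟩, lambda_zero N s, htend, ?_⟩
  exact ⟨fun α hα => ⟨hpos α hα, hle α hα⟩, hanti.injOn, hsurj⟩

end
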